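/- arXiv:1710.04614 — 2 statements merged into one kernel-verified Lean document; each statement's English description precedes it below -/
import Mathlib

section
/- If mono(I) is a prime ideal, then mono(I) = mono(P) for some minimal prime P of I. In particular, mono(I) = 0 iff mono(P) = 0 for some minimal prime P of I. -/
open MvPolynomial

/-- A (monic) monomial in a polynomial ring. -/
def IsMonomial {k : Type*} [Field k] {n : ℕ} (f : MvPolynomial (Fin n) k) : Prop :=
  ∃ s : Fin n →₀ ℕ, f = MvPolynomial.monomial s 1

/-- `mono I` is the largest monomial subideal of `I`: the ideal generated by all
monomials contained in `I`. -/
noncomputable def mono {k : Type*} [Field k] {n : ℕ} (I : Ideal (MvPolynomial (Fin n) k)) :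
    Ideal (MvPolynomial (Fin n) k) :=
  Ideal.span {f | IsMonomial f ∧ f ∈ I}

/-- A monomial ideal is one generated by its monomials. -/
def IsMonomialIdeal {k : Type*} [Field k] {n : ℕ} (I : Ideal (MvPolynomial (Fin n) k)) : Prop :=
  mono I = I

/-- The homogeneous maximal ideal `(x₁, …, xₙ)`. -/
noncomputable def maxIdeal (k : Type*) [Field k] (n : ℕ) : Ideal (MvPolynomial (Fin n) k) :=
  Ideal.span (Set.range MvPolynomial.X)

/-- A graded (homogeneous) ideal. -/
def IsHomogeneousIdeal {k : Type*} [Field k] {n : ℕ}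
    (I : Ideal (MvPolynomial (Fin n) k)) : Prop :=
  ∀ f ∈ I, ∀ i : ℕ, MvPolynomial.homogeneousComponent i f ∈ I

/-!
A polynomial lies in `mono J` iff every monomial of its support lies in `J`. Hence `mono`
turns the intersection `√I = ⋂ P` over the finitely many minimal primes of `I` into
`⋂ mono P`, and `mono √I ⊆ √(mono I)` since a power of a monomial is a monomial. If `mono I`
is prime it is radical, so it contains the finite intersection `⋂ mono P`, hence one of the
`mono P`; the reverse inclusion `mono I ⊆ mono P` holds because `I ⊆ P`.
-/

lemma MvPolynomial.mem_ideal_of_forall_monomial_mem {R σ : Type*} [CommSemiring R]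
    {J : Ideal (MvPolynomial σ R)} {f : MvPolynomial σ R}
    (h : ∀ s ∈ f.support, monomial s (1 : R) ∈ J) : f ∈ J := by
  rw [f.as_sum]
  refine J.sum_mem fun s hs => ?_
  rw [← mul_one (coeff s f), ← C_mul_monomial]
  exact J.mul_mem_left _ (h s hs)

section Mono

variable {k : Type*} [Field k] {n : ℕ}

lemma monomial_mem_of_mem_mono {J : Ideal (MvPolynomial (Fin n) k)}
    {f : MvPolynomial (Fin n) k} (hf : f ∈ mono J) {s : Fin n →₀ ℕ} (hs : s ∈ f.support) :
    monomial s (1 : k) ∈ J := by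
  classical
  induction hf using Submodule.span_induction generalizing s with
  | mem g hg =>
    obtain ⟨⟨t, rfl⟩, hgJ⟩ := hg
    rw [support_monomial, if_neg one_ne_zero, Finset.mem_singleton] at hs
    rwa [hs]
  | zero => simp at hs
  | add g h _ _ ihg ihh =>
    rcases Finset.mem_union.mp (support_add hs) with hs | hs
    · exact ihg hs
    · exact ihh hs
  | smul c g _ ihg =>
    obtain ⟨a, -, b, hb, rfl⟩ := Finset.mem_add.mp (support_mul c g hs)
    rw [← one_mul (1 : k), ← monomial_mul]
    exact J.mul_mem_left _ (ihg hb)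

lemma monomial_mem_mono {J : Ideal (MvPolynomial (Fin n) k)} {s : Fin n →₀ ℕ}
    (h : monomial s (1 : k) ∈ J) : monomial s (1 : k) ∈ mono J :=
  Ideal.subset_span ⟨⟨s, rfl⟩, h⟩

theorem mem_mono_iff {J : Ideal (MvPolynomial (Fin n) k)} {f : MvPolynomial (Fin n) k} :
    f ∈ mono J ↔ ∀ s ∈ f.support, monomial s (1 : k) ∈ J :=
  ⟨fun hf _ hs => monomial_mem_of_mem_mono hf hs,
    fun h => mem_ideal_of_forall_monomial_mem fun s hs => monomial_mem_mono (h s hs)⟩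

lemma mono_monotone : Monotone (mono (k := k) (n := n)) :=
  fun _ _ h => Ideal.span_mono fun _ hf => ⟨hf.1, h hf.2⟩

theorem mono_sInf (S : Set (Ideal (MvPolynomial (Fin n) k))) :
    mono (sInf S) = ⨅ P ∈ S, mono P := by
  ext f
  simp only [mem_mono_iff, Ideal.mem_sInf, Submodule.mem_iInf]
  exact forall₂_comm

theorem mono_radical_le (I : Ideal (MvPolynomial (Fin n) k)) :
    mono I.radical ≤ (mono I).radical := fun f hf =>
  mem_ideal_of_forall_monomial_mem fun s hs => by
    obtain ⟨t, ht⟩ := mem_mono_iff.mp hf s hs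
    rw [monomial_pow, one_pow] at ht
    exact ⟨t, by rw [monomial_pow, one_pow]; exact monomial_mem_mono ht⟩

theorem exists_mem_minimalPrimes_mono_eq {I : Ideal (MvPolynomial (Fin n) k)}
    (hp : (mono I).IsPrime) : ∃ P ∈ I.minimalPrimes, mono I = mono P := by
  have hfin := I.finite_minimalPrimes_of_isNoetherianRing
  have hinf : hfin.toFinset.inf mono ≤ mono I :=
    calc hfin.toFinset.inf mono = mono I.radical := by
          rw [Finset.inf_eq_iInf, ← Ideal.sInf_minimalPrimes, mono_sInf]
          simp only [Set.Finite.mem_toFinset]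
      _ ≤ (mono I).radical := mono_radical_le I
      _ = mono I := hp.radical
  obtain ⟨P, hP, hle⟩ := hp.inf_le'.mp hinf
  rw [hfin.mem_toFinset] at hP
  exact ⟨P, hP, le_antisymm (mono_monotone hP.1.2) hle⟩

end Mono

theorem mono_prime_iff_minimalPrime_general {k : Type*} [Field k] {n : ℕ}
    (I : Ideal (MvPolynomial (Fin n) k)) :
    ((mono I).IsPrime → ∃ P ∈ I.minimalPrimes, mono I = mono P) ∧
      (mono I = ⊥ ↔ ∃ P ∈ I.minimalPrimes, mono P = ⊥) := by
  refine ⟨exists_mem_minimalPrimes_mono_eq, fun h0 => ?_, fun ⟨P, hP, hP0⟩ => ?_⟩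
  · obtain ⟨P, hP, hIP⟩ := exists_mem_minimalPrimes_mono_eq (h0 ▸ Ideal.isPrime_bot)
    exact ⟨P, hP, hIP ▸ h0⟩
  · exact le_bot_iff.mp (hP0 ▸ mono_monotone hP.1.2)

theorem mono_prime_iff_minimalPrime {k : Type*} [Field k] {n : ℕ}
    (I : Ideal (MvPolynomial (Fin n) k)) (hI : I ≠ ⊤) :
    ((mono I).IsPrime → ∃ P ∈ I.minimalPrimes, mono I = mono P) ∧
      (mono I = ⊥ ↔ ∃ P ∈ I.minimalPrimes, mono P = ⊥) :=
  mono_prime_iff_minimalPrime_general I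
end

section
/- Any nonzerodivisor on R/I is a nonzerodivisor on R/mono(I). -/
open MvPolynomial

/-!
The exponents `d` with `xᵈ ∈ I` form an upper set `s`, and `mono I` is the ideal of polynomials
supported in `s`. So it suffices that if `r x` is supported in an upper set `s` and `x` is not, then
`r xᵈ` is supported in `s` for some `d ∉ s`: then `r xᵈ ∈ mono I ⊆ I` while `xᵈ ∉ I`.

Write `s - u = {a | a + u ∈ s}` and choose `u` so that the exponents of `x` outside `s - u` form a
minimal nonempty set. Minimality forces these exponents `γ` to have a common colon set
`{a | a + γ ∈ s - u}`. Split `r = g + h` along it and let `w` be the part of `x` outside `s - u`.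
Then `g w`, hence also `h w`, is supported in `s - u`, but every exponent of `h w` lies outside
`s - u`; so `h w = 0`, `h = 0`, and `d = γ + u` works.
-/

theorem IsUpperSet.exists_uniform_translate {M : Type*} [AddCommMonoid M] [PartialOrder M]
    [CanonicallyOrderedAdd M] {s : Set M} (hs : IsUpperSet s) (F : Finset M) (hF : ¬↑F ⊆ s) :
    ∃ u, ∃ γ₀ ∈ F, γ₀ + u ∉ s ∧ ∀ γ ∈ F, γ + u ∉ s → ∀ a, a + γ + u ∈ s ↔ a + γ₀ + u ∈ s := by
  classical
  let T : M → Finset M := fun u => {γ ∈ F | γ + u ∉ s}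
  have hT_anti (u a : M) : T (a + u) ⊆ T u := by
    simp only [T, Finset.subset_iff, Finset.mem_filter]
    exact fun γ ⟨hγ, hγs⟩ => ⟨hγ, fun h => hγs (hs (by rw [add_left_comm]; exact le_add_self) h)⟩
  have hT₀ : (T 0).Nonempty := by
    obtain ⟨γ, hγ, hγs⟩ := Set.not_subset.mp hF
    exact ⟨γ, Finset.mem_filter.mpr ⟨hγ, by rwa [add_zero]⟩⟩
  obtain ⟨u, hu, hmin⟩ :=
    (InvImage.wf T wellFounded_lt).has_min {u | (T u).Nonempty} ⟨0, hT₀⟩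
  have hT_stable (a : M) (ha : (T (a + u)).Nonempty) : T (a + u) = T u :=
    (hT_anti u a).eq_of_not_lt (hmin _ ha)
  have hT_escape (a γ γ' : M) (hγ : γ ∈ T u) (hγ' : γ' ∈ T u) (h : a + γ + u ∉ s) :
      a + γ' + u ∉ s := by
    have hγa : γ ∈ T (a + u) :=
      Finset.mem_filter.mpr ⟨(Finset.mem_filter.mp hγ).1, by rwa [add_left_comm, ← add_assoc]⟩
    rw [← hT_stable a ⟨γ, hγa⟩] at hγ'
    have := (Finset.mem_filter.mp hγ').2
    rwa [add_left_comm, ← add_assoc] at this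
  obtain ⟨γ₀, hγ₀⟩ := hu
  exact ⟨u, γ₀, (Finset.mem_filter.mp hγ₀).1, (Finset.mem_filter.mp hγ₀).2, fun γ hγF hγs a =>
    have hγ : γ ∈ T u := Finset.mem_filter.mpr ⟨hγF, hγs⟩
    not_iff_not.mp ⟨hT_escape a γ γ₀ hγ hγ₀, hT_escape a γ₀ γ hγ₀ hγ⟩⟩

namespace MvPolynomial

variable {σ R : Type*}

theorem exists_mem_restrictSupport_add_eq [CommSemiring R] (f : MvPolynomial σ R)
    (t : Set (σ →₀ ℕ)) :
    ∃ g ∈ restrictSupport R t, ∃ h ∈ restrictSupport R (↑f.support \ t), g + h = f := by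
  classical
  refine ⟨∑ d ∈ f.support with d ∈ t, monomial d (f.coeff d), ?_,
    ∑ d ∈ f.support with d ∉ t, monomial d (f.coeff d), ?_, ?_⟩
  pick_goal 3
  · rw [Finset.sum_filter_add_sum_filter_not, ← f.as_sum]
  all_goals
    intro d hd
    obtain ⟨e, he, hde⟩ := Finset.mem_biUnion.mp (support_sum hd)
    rw [Finset.mem_singleton.mp (support_monomial_subset hde)]
    simp only [Finset.mem_filter] at he
    simp [he]

theorem mul_monomial_mem_restrictSupportIdeal_iff [CommSemiring R] {s : Set (σ →₀ ℕ)}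
    (hs : IsUpperSet s) {p : MvPolynomial σ R} {u : σ →₀ ℕ} :
    p * monomial u 1 ∈ restrictSupportIdeal R s hs ↔ ∀ a ∈ p.support, a + u ∈ s := by
  have : (p * monomial u 1).support = p.support.map (addRightEmbedding u) :=
    AddMonoidAlgebra.support_coeff_mul_single p _ (by simp) _
  change ↑(p * monomial u 1).support ⊆ s ↔ _
  simp [this, Set.subset_def]

section NoZeroDivisors

variable [CommRing R] [NoZeroDivisors R] {s : Set (σ →₀ ℕ)} (hs : IsUpperSet s)

theorem mul_monomial_mem_of_mul_mem {r w : MvPolynomial σ R} {γ₀ : σ →₀ ℕ} (hw : w ≠ 0)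
    (huniform : ∀ γ ∈ w.support, ∀ a, a + γ ∈ s ↔ a + γ₀ ∈ s)
    (hrw : r * w ∈ restrictSupportIdeal R s hs) :
    r * monomial γ₀ 1 ∈ restrictSupportIdeal R s hs := by
  classical
  set J := restrictSupportIdeal R s hs
  obtain ⟨g, hg, h, hh, rfl⟩ := exists_mem_restrictSupport_add_eq r {a | a + γ₀ ∈ s}
  have hgw : g * w ∈ J := by
    intro d hd
    obtain ⟨a, ha, γ, hγ, rfl⟩ := Finset.mem_add.mp (support_mul g w hd)
    exact (huniform γ hγ a).2 (hg ha)
  have hhw : h * w = 0 := by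
    have hmem : h * w ∈ J := by simpa [add_mul] using J.sub_mem hrw hgw
    rw [← support_eq_empty, Finset.eq_empty_iff_forall_notMem]
    intro d hd
    obtain ⟨a, ha, γ, hγ, rfl⟩ := Finset.mem_add.mp (support_mul h w hd)
    exact (hh ha).2 ((huniform γ hγ a).1 (hmem hd))
  rw [(mul_eq_zero.mp hhw).resolve_right hw, add_zero, mul_monomial_mem_restrictSupportIdeal_iff]
  exact fun a ha => hg ha

theorem exists_monomial_notMem_mul_mem {r x : MvPolynomial σ R}
    (hx : x ∉ restrictSupportIdeal R s hs) (hrx : r * x ∈ restrictSupportIdeal R s hs) :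
    ∃ d ∉ s, r * monomial d 1 ∈ restrictSupportIdeal R s hs := by
  obtain ⟨u, γ₀, hγ₀x, hγ₀s, huniform⟩ := hs.exists_uniform_translate x.support hx
  have hs' : IsUpperSet ((· + u) ⁻¹' s) := hs.preimage fun _ _ h => by gcongr
  set J' := restrictSupportIdeal R _ hs'
  obtain ⟨g, hg, w, hw, hgw⟩ := exists_mem_restrictSupport_add_eq x ((· + u) ⁻¹' s)
  have hrx' : r * x ∈ J' := fun d hd => hs le_self_add (hrx hd)
  have hrw : r * w ∈ J' := by
    simpa [← hgw, mul_add] using J'.sub_mem hrx' (J'.mul_mem_left r (show g ∈ J' from hg))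
  have hw0 : w ≠ 0 := by
    rintro rfl
    rw [add_zero] at hgw
    exact hγ₀s (hg (hgw ▸ hγ₀x))
  have hrγ₀ := mul_monomial_mem_of_mul_mem hs' hw0 (γ₀ := γ₀)
    (fun γ hγ a => huniform γ (hw hγ).1 (hw hγ).2 a) hrw
  refine ⟨γ₀ + u, hγ₀s, ?_⟩
  rw [mul_monomial_mem_restrictSupportIdeal_iff] at hrγ₀ ⊢
  exact fun a ha => by simpa [add_assoc] using hrγ₀ a ha

end NoZeroDivisors

end MvPolynomial

theorem isUpperSet_setOf_monomial_mem {σ R : Type*} [CommSemiring R]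
    (I : Ideal (MvPolynomial σ R)) : IsUpperSet {d | monomial d (1 : R) ∈ I} := by
  intro d e hde hd
  have : monomial e (1 : R) = monomial (e - d) 1 * monomial d 1 := by
    rw [monomial_mul, one_mul, tsub_add_cancel_of_le hde]
  show monomial e (1 : R) ∈ I
  rw [this]
  exact I.mul_mem_left _ hd

theorem mono_le {k : Type*} [Field k] {n : ℕ} (I : Ideal (MvPolynomial (Fin n) k)) :
    mono I ≤ I :=
  Ideal.span_le.mpr fun _ hf => hf.2

theorem mono_eq_restrictSupportIdeal {k : Type*} [Field k] {n : ℕ}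
    (I : Ideal (MvPolynomial (Fin n) k)) :
    mono I = restrictSupportIdeal k _ (isUpperSet_setOf_monomial_mem I) := by
  apply le_antisymm
  · refine Ideal.span_le.mpr ?_
    rintro _ ⟨⟨d, rfl⟩, hd⟩ e he
    rwa [Finset.mem_singleton.mp (support_monomial_subset he)]
  · intro f hf
    have hf' : f ∈ restrictSupport k {d | monomial d (1 : k) ∈ I} := hf
    rw [restrictSupport_eq_span] at hf'
    refine (Submodule.span_le (p := (mono I).restrictScalars k)).mpr ?_ hf'
    rintro _ ⟨d, hd, rfl⟩
    exact Ideal.subset_span ⟨⟨d, rfl⟩, hd⟩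

theorem nonzerodivisor_mono {k : Type*} [Field k] {n : ℕ}
    (I : Ideal (MvPolynomial (Fin n) k)) (r : MvPolynomial (Fin n) k)
    (hr : ∀ x : MvPolynomial (Fin n) k, r * x ∈ I → x ∈ I) :
    ∀ x : MvPolynomial (Fin n) k, r * x ∈ mono I → x ∈ mono I := by
  intro x hrx
  by_contra hx
  rw [mono_eq_restrictSupportIdeal] at hrx hx
  obtain ⟨d, hd, hrd⟩ := exists_monomial_notMem_mul_mem _ hx hrx
  rw [← mono_eq_restrictSupportIdeal] at hrd
  exact hd (hr _ (mono_le I hrd))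
end
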